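/- Define L_G(θ₁, θ₂, φ) = (θ₂ − φ·θ₁ − 1)² − (1/2)·(θ₁ + φ·θ₂ − 1)². Then (θ₁, θ₂) = (1, 1) is a critical point of the function f(θ₁, θ₂) := L_G(θ₁, θ₂, 0) (its gradient vanishes at (1,1)), but (1, 1) is NOT a local minimum of f: for every t ≠ 0, f(1 + t, 1) = −t²/2 < 0 = f(1, 1). Consequently (1, 1, 0) is not a differential Nash equilibrium of the game of Example 1 even though it is a locally stable stationary point. -/

import Mathlib

/-!
At `φ = 0` the loss decouples as `(θ₂ - 1)² - (θ₁ - 1)²/2`, a saddle centred at `(1, 1)`: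
both squared terms vanish to second order there, so the gradient is zero, while moving
along the `θ₁`-axis strictly decreases the loss.
-/

open Filter Topology

/-- The generator loss of Example 1. -/
noncomputable def LG (θ₁ θ₂ φ : ℝ) : ℝ :=
  (θ₂ - φ * θ₁ - 1) ^ 2 - (1 / 2) * (θ₁ + φ * θ₂ - 1) ^ 2

theorem HasFDerivAt.sq_of_apply_eq_zero {E : Type*} [NormedAddCommGroup E] [NormedSpace ℝ E]
    {g : E → ℝ} {g' : E →L[ℝ] ℝ} {x : E} (hg : HasFDerivAt g g' x) (hx : g x = 0) :
    HasFDerivAt (fun y => g y ^ 2) (0 : E →L[ℝ] ℝ) x := by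
  simpa [hx] using hg.pow 2

theorem not_isLocalMin_of_forall_lt_along_line {E β : Type*} [TopologicalSpace E]
    [AddCommGroup E] [Module ℝ E] [ContinuousAdd E] [ContinuousSMul ℝ E] [Preorder β]
    {f : E → β} {x v : E} (h : ∀ t : ℝ, t ≠ 0 → f (x + t • v) < f x) : ¬ IsLocalMin f x := by
  intro hmin
  have hline : Tendsto (fun t : ℝ => x + t • v) (𝓝[≠] 0) (𝓝 x) :=
    ((continuous_const.add (continuous_id.smul continuous_const)).tendsto' 0 x
      (by simp)).mono_left nhdsWithin_le_nhds
  obtain ⟨t, hle, ht⟩ := ((hline.eventually hmin).and self_mem_nhdsWithin).exists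
  exact (h t ht).not_ge hle

theorem LG_zero (θ₁ θ₂ : ℝ) : LG θ₁ θ₂ 0 = (θ₂ - 1) ^ 2 - (1 / 2) * (θ₁ - 1) ^ 2 := by
  simp [LG]

theorem hasFDerivAt_LG_zero :
    HasFDerivAt (fun p : ℝ × ℝ => LG p.1 p.2 0) (0 : ℝ × ℝ →L[ℝ] ℝ) (1, 1) := by
  have hθ₂ := (hasFDerivAt_snd.sub_const (1 : ℝ)).sq_of_apply_eq_zero (x := ((1 : ℝ), (1 : ℝ)))
    (sub_self 1)
  have hθ₁ := (hasFDerivAt_fst.sub_const (1 : ℝ)).sq_of_apply_eq_zero (x := ((1 : ℝ), (1 : ℝ)))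
    (sub_self 1)
  have hloss := hθ₂.sub (hθ₁.const_mul (1 / 2 : ℝ))
  rw [smul_zero, sub_zero] at hloss
  exact hloss.congr_of_eventuallyEq (Eventually.of_forall fun p => LG_zero p.1 p.2)

theorem LG_one_add_one_zero (t : ℝ) : LG (1 + t) 1 0 = -t ^ 2 / 2 := by
  rw [LG_zero]
  ring

/-- `(1, 1)` is a critical point of `f(θ₁, θ₂) := L_G(θ₁, θ₂, 0)` but not a local
minimum: `f(1 + t, 1) = −t²/2 < 0 = f(1, 1)` for every `t ≠ 0`. Consequently
`(1, 1, 0)` is not a differential Nash equilibrium of the game of Example 1. -/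
theorem example1_not_DNE :
    fderiv ℝ (fun p : ℝ × ℝ => LG p.1 p.2 0) (1, 1) = 0 ∧
    LG 1 1 0 = 0 ∧
    (∀ t : ℝ, t ≠ 0 → LG (1 + t) 1 0 = -t ^ 2 / 2 ∧ LG (1 + t) 1 0 < LG 1 1 0) ∧
    ¬ IsLocalMin (fun p : ℝ × ℝ => LG p.1 p.2 0) (1, 1) := by
  have hLG_one_one : LG 1 1 0 = 0 := by norm_num [LG_zero]
  have hdescent (t : ℝ) (ht : t ≠ 0) : LG (1 + t) 1 0 < LG 1 1 0 := by
    rw [LG_one_add_one_zero, hLG_one_one]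
    have : 0 < t ^ 2 := by positivity
    linarith
  refine ⟨hasFDerivAt_LG_zero.fderiv, hLG_one_one,
    fun t ht => ⟨LG_one_add_one_zero t, hdescent t ht⟩, not_isLocalMin_of_forall_lt_along_line
      (v := ((1 : ℝ), (0 : ℝ))) fun t ht => ?_⟩
  simpa using hdescent t ht
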